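/- arXiv:1912.07248 — 2 statements merged into one kernel-verified Lean document; each statement's English description precedes it below -/
import Mathlib

section
/- Let h(V, S) = λ‖S‖₁ + p·‖(X − S)(I − VVᵀ)‖_F² with p = 1/(2‖(X − S₀)(I − V₀V₀ᵀ)‖_F) for fixed (V₀, S₀) where the denominator is positive. If h(V₁, S₁) ≤ h(V₀, S₀), then λ‖S₁‖₁ + ‖(X − S₁)(I − V₁V₁ᵀ)‖_F ≤ λ‖S₀‖₁ + ‖(X − S₀)(I − V₀V₀ᵀ)‖_F. -/
open Matrix

/-- Frobenius norm of a real matrix. -/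
noncomputable def frob {α β : Type*} [Fintype α] [Fintype β]
    (M : Matrix α β ℝ) : ℝ :=
  Real.sqrt (∑ i, ∑ j, (M i j) ^ 2)

/-- Entrywise ℓ¹ norm of a real matrix. -/
def l1norm {α β : Type*} [Fintype α] [Fintype β] (M : Matrix α β ℝ) : ℝ :=
  ∑ i, ∑ j, |M i j|

theorem stmt_9 {d n r : ℕ} (X S₀ S₁ : Matrix (Fin d) (Fin n) ℝ)
    (V₀ V₁ : Matrix (Fin n) (Fin r) ℝ)
    (hV₀ : V₀ᵀ * V₀ = 1) (hV₁ : V₁ᵀ * V₁ = 1)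
    (lam : ℝ) (hlam : 0 < lam)
    (ha : 0 < frob ((X - S₀) * (1 - V₀ * V₀ᵀ)))
    (p : ℝ) (hp : p = 1 / (2 * frob ((X - S₀) * (1 - V₀ * V₀ᵀ))))
    (h : lam * l1norm S₁ + p * (frob ((X - S₁) * (1 - V₁ * V₁ᵀ))) ^ 2 ≤
         lam * l1norm S₀ + p * (frob ((X - S₀) * (1 - V₀ * V₀ᵀ))) ^ 2) :
    lam * l1norm S₁ + frob ((X - S₁) * (1 - V₁ * V₁ᵀ)) ≤
      lam * l1norm S₀ + frob ((X - S₀) * (1 - V₀ * V₀ᵀ)) := by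
  set a := frob ((X - S₀) * (1 - V₀ * V₀ᵀ)) with ha'
  set b := frob ((X - S₁) * (1 - V₁ * V₁ᵀ)) with hb'
  have hb : 0 ≤ b := Real.sqrt_nonneg _
  subst hp
  rw [div_mul_eq_mul_div, div_mul_eq_mul_div, one_mul, one_mul] at h
  have h2 : lam * l1norm S₁ + b ^ 2 / (2 * a) ≤ lam * l1norm S₀ + a / 2 := by
    have : a ^ 2 / (2 * a) = a / 2 := by field_simp
    linarith [this ▸ h]
  have key : b ≤ b ^ 2 / (2 * a) + a / 2 := by
    rw [div_add' _ _ _ (by positivity), le_div_iff₀ (by positivity)]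
    nlinarith [sq_nonneg (b - a)]
  linarith
end

section
/- Let L₀ = [L₁, …, L_k] be a block column partition where each L_i has compact SVD U_iΣ_iV_iᵀ, and suppose L₀ has compact SVD U₀Σ₀V₀ᵀ with rank(L₀) = Σ_i rank(L_i). Then there exists an orthogonal matrix Q such that V₀ = V̄₀Q, where V̄₀ is the block-diagonal matrix diag(V₁, …, V_k). -/
open Matrix

lemma rank_svd {m r : ℕ} (U : Matrix (Fin m) (Fin r) ℝ)
    {nt : Type*} [Fintype nt] [DecidableEq nt]
    (V : Matrix nt (Fin r) ℝ) (σ : Fin r → ℝ)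
    (hU : Uᵀ * U = 1) (hV : Vᵀ * V = 1) (hσ : ∀ j, 0 < σ j) :
    (U * Matrix.diagonal σ * Vᵀ).rank = r := by
  have hd : (Matrix.diagonal σ).rank = r := by
    rw [Matrix.rank_diagonal]
    rw [Fintype.card_congr (Equiv.subtypeUnivEquiv fun i => (hσ i).ne')]
    simp
  have h1 : Uᵀ * (U * Matrix.diagonal σ * Vᵀ) * V = Matrix.diagonal σ := by
    rw [Matrix.mul_assoc U, ← Matrix.mul_assoc Uᵀ, hU, Matrix.one_mul,
      Matrix.mul_assoc, hV, Matrix.mul_one]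
  apply le_antisymm
  · calc (U * Matrix.diagonal σ * Vᵀ).rank ≤ (U * Matrix.diagonal σ).rank :=
        Matrix.rank_mul_le_left _ _
      _ ≤ (Matrix.diagonal σ).rank := Matrix.rank_mul_le_right _ _
      _ = r := hd
  · calc r = (Matrix.diagonal σ).rank := hd.symm
      _ = (Uᵀ * (U * Matrix.diagonal σ * Vᵀ) * V).rank := by rw [h1]
      _ ≤ (Uᵀ * (U * Matrix.diagonal σ * Vᵀ)).rank := Matrix.rank_mul_le_left _ _
      _ ≤ (U * Matrix.diagonal σ * Vᵀ).rank := Matrix.rank_mul_le_right _ _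

theorem stmt_15 {m k : ℕ} (nn rk : Fin k → ℕ) (r₀ : ℕ)
    (L : (i : Fin k) → Matrix (Fin m) (Fin (nn i)) ℝ)
    (U : (i : Fin k) → Matrix (Fin m) (Fin (rk i)) ℝ)
    (V : (i : Fin k) → Matrix (Fin (nn i)) (Fin (rk i)) ℝ)
    (σ : (i : Fin k) → Fin (rk i) → ℝ)
    (hU : ∀ i, (U i)ᵀ * U i = 1) (hVo : ∀ i, (V i)ᵀ * V i = 1)
    (hσ : ∀ i j, 0 < σ i j)
    (hSVD : ∀ i, L i = U i * Matrix.diagonal (σ i) * (V i)ᵀ)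
    (L₀ : Matrix (Fin m) ((i : Fin k) × Fin (nn i)) ℝ)
    (hL₀ : L₀ = Matrix.of fun x p => L p.1 x p.2)
    (U₀ : Matrix (Fin m) (Fin r₀) ℝ)
    (V₀ : Matrix ((i : Fin k) × Fin (nn i)) (Fin r₀) ℝ)
    (σ₀ : Fin r₀ → ℝ)
    (hU₀ : U₀ᵀ * U₀ = 1) (hV₀ : V₀ᵀ * V₀ = 1) (hσ₀ : ∀ j, 0 < σ₀ j)
    (hSVD₀ : L₀ = U₀ * Matrix.diagonal σ₀ * V₀ᵀ)
    (hrank : L₀.rank = ∑ i, (L i).rank) :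
    ∃ Q : Matrix ((i : Fin k) × Fin (rk i)) (Fin r₀) ℝ,
      Qᵀ * Q = 1 ∧ Q * Qᵀ = 1 ∧
      V₀ = Matrix.blockDiagonal' (fun i => V i) * Q := by
  -- ranks
  have hrk : ∀ i, (L i).rank = rk i := fun i => by
    rw [hSVD i]; exact rank_svd _ _ _ (hU i) (hVo i) (hσ i)
  have hr0 : L₀.rank = r₀ := by
    rw [hSVD₀]; exact rank_svd _ _ _ hU₀ hV₀ hσ₀
  have hcard : r₀ = ∑ i, rk i := by
    rw [← hr0, hrank]; exact Finset.sum_congr rfl fun i _ => hrk i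
  set B : Matrix ((i : Fin k) × Fin (nn i)) ((i : Fin k) × Fin (rk i)) ℝ :=
    Matrix.blockDiagonal' (fun i => V i) with hB
  have hBtB : Bᵀ * B = 1 := by
    rw [hB, Matrix.blockDiagonal'_transpose, ← Matrix.blockDiagonal'_mul]
    simp only [hVo]
    exact Matrix.blockDiagonal'_one
  set W : Matrix ((i : Fin k) × Fin (rk i)) (Fin m) ℝ :=
    Matrix.of (fun p x => σ p.1 p.2 * U p.1 x p.2) with hW
  have hLT : L₀ᵀ = B * W := by
    ext ⟨i, p⟩ x
    simp only [hL₀, hSVD, Matrix.transpose_apply, Matrix.of_apply, hB, hW,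
      Matrix.mul_apply]
    rw [← Finset.univ_sigma_univ, Finset.sum_sigma]
    rw [Finset.sum_eq_single i]
    · apply Finset.sum_congr rfl
      intro j _
      simp only [Matrix.blockDiagonal'_apply_eq, Matrix.of_apply,
        Matrix.diagonal_apply]
      rw [Finset.sum_eq_single j]
      · simp; ring
      · intro b _ hb; simp [hb]
      · simp
    · intro b _ hb
      apply Finset.sum_eq_zero
      intro j _
      rw [Matrix.blockDiagonal'_apply_ne _ _ _ (Ne.symm hb), zero_mul]
    · simp
  set Q : Matrix ((i : Fin k) × Fin (rk i)) (Fin r₀) ℝ :=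
    W * U₀ * Matrix.diagonal (fun j => (σ₀ j)⁻¹) with hQ
  have hV₀eq : V₀ = B * Q := by
    have h1 : L₀ᵀ * U₀ = V₀ * Matrix.diagonal σ₀ := by
      rw [hSVD₀]
      simp only [Matrix.transpose_mul, Matrix.transpose_transpose,
        Matrix.diagonal_transpose]
      rw [Matrix.mul_assoc, Matrix.mul_assoc, hU₀, Matrix.mul_one]
    have h2 : Matrix.diagonal σ₀ * Matrix.diagonal (fun j => (σ₀ j)⁻¹) = 1 := by
      rw [Matrix.diagonal_mul_diagonal,
        show (fun i => σ₀ i * (σ₀ i)⁻¹) = fun _ => (1 : ℝ) from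
          funext fun i => mul_inv_cancel₀ (hσ₀ i).ne', Matrix.diagonal_one]
    calc V₀ = V₀ * (Matrix.diagonal σ₀ * Matrix.diagonal (fun j => (σ₀ j)⁻¹)) := by
          rw [h2, Matrix.mul_one]
      _ = (V₀ * Matrix.diagonal σ₀) * Matrix.diagonal (fun j => (σ₀ j)⁻¹) := by
          rw [Matrix.mul_assoc]
      _ = L₀ᵀ * U₀ * Matrix.diagonal (fun j => (σ₀ j)⁻¹) := by rw [h1]
      _ = B * Q := by rw [hLT, hQ]; simp only [Matrix.mul_assoc]
  have hQtQ : Qᵀ * Q = 1 := by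
    have h := congrArg (fun M => Mᵀ * M) hV₀eq
    rw [hV₀, Matrix.transpose_mul, Matrix.mul_assoc, ← Matrix.mul_assoc Bᵀ,
      hBtB, Matrix.one_mul] at h
    exact h.symm
  have e : Fin r₀ ≃ (i : Fin k) × Fin (rk i) := by
    apply Fintype.equivOfCardEq
    simp [hcard]
  exact ⟨Q, hQtQ, (Matrix.mul_eq_one_comm_of_equiv e).mp hQtQ, hV₀eq⟩
end
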